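/- arXiv:2311.06458 — 3 statements merged into one kernel-verified Lean document; each statement's English description precedes it below -/
import Mathlib

section
/- Let X, Y, and Z be pairwise disjoint node sets in an MPDAG G = (V,E). Suppose there is a proper possibly causal path from X to Y in G that starts with an undirected edge and does not contain nodes in Z. Then there is one such path ⟨X = V0, …, Vk = Y⟩ with X ∈ X, Y ∈ Y, k ≥ 1, such that there exist two DAGs in [G] in which the paths corresponding to this node sequence take the forms X → … → Y and X ← V1 → … → Y (X ← Y when k = 1), respectively. -/
open MeasureTheory
open scoped ENNReal

namespace CondAdj

/-- Edge marks of a (partial) mixed graph.  `Mark.none` means "no edge". -/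
inductive Mark : Type
  | none
  | tail
  | arrow
  | circle
  deriving DecidableEq

/-- A marked graph on node type `V`:  `m a b` is the edge mark at `b` of the edge
between `a` and `b` (`Mark.none` iff `a` and `b` are not adjacent).
A directed edge `a → b` has a tail at `a` and an arrowhead at `b`;
an undirected edge `a − b` (resp. `a ∘-∘ b`) has tails (resp. circles) at both ends;
a bidirected edge `a ↔ b` has arrowheads at both ends. -/
structure MG (V : Type) where
  m : V → V → Mark
  none_symm : ∀ a b, m a b = Mark.none ↔ m b a = Mark.none
  irrefl : ∀ a, m a a = Mark.none

namespace MG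

variable {V : Type}

/-- `a` and `b` are adjacent. -/
def Adj (G : MG V) (a b : V) : Prop := G.m a b ≠ Mark.none

/-- Directed edge `a → b`. -/
def DirE (G : MG V) (a b : V) : Prop := G.m a b = Mark.arrow ∧ G.m b a = Mark.tail

/-- Bidirected edge `a ↔ b`. -/
def BidirE (G : MG V) (a b : V) : Prop := G.m a b = Mark.arrow ∧ G.m b a = Mark.arrow

/-- Undirected edge (`a − b` or `a ∘-∘ b`). -/
def UndirE (G : MG V) (a b : V) : Prop :=
  (G.m a b = Mark.tail ∧ G.m b a = Mark.tail) ∨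
    (G.m a b = Mark.circle ∧ G.m b a = Mark.circle)

/-- Edge with an arrowhead at `b` (i.e. `a *→ b`). -/
def IntoE (G : MG V) (a b : V) : Prop := G.m a b = Mark.arrow

/-- `b` is a descendant of `a` (via a directed path, possibly of length 0). -/
def Desc (G : MG V) (a b : V) : Prop := Relation.ReflTransGen G.DirE a b

/-- Descendants of a set of nodes. -/
def De (G : MG V) (A : Set V) : Set V := {b | ∃ a ∈ A, G.Desc a b}

/-- Ancestors of a set of nodes. -/
def An (G : MG V) (A : Set V) : Set V := {a | ∃ b ∈ A, G.Desc a b}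

/-- `p 0, …, p n` is a path in `G` (distinct nodes, consecutive ones adjacent). -/
def IsPath (G : MG V) (p : ℕ → V) (n : ℕ) : Prop :=
  1 ≤ n ∧ (∀ i ≤ n, ∀ j ≤ n, p i = p j → i = j) ∧ ∀ i < n, G.Adj (p i) (p (i + 1))

/-- A path from `X` to `Y`. -/
def IsPathFromTo (G : MG V) (p : ℕ → V) (n : ℕ) (X Y : Set V) : Prop :=
  G.IsPath p n ∧ p 0 ∈ X ∧ p n ∈ Y

/-- A possibly causal (possibly directed) path: no arrowhead pointing backwards,
i.e. there is no edge `p i ←* p j` for `i < j`. -/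
def PossCausal (G : MG V) (p : ℕ → V) (n : ℕ) : Prop :=
  ∀ i j, i < j → j ≤ n → ¬ G.IntoE (p j) (p i)

/-- A causal (directed) path. -/
def Causal (G : MG V) (p : ℕ → V) (n : ℕ) : Prop := ∀ i < n, G.DirE (p i) (p (i + 1))

/-- The non-endpoint node at position `i` of `p` is a collider. -/
def ColliderAt (G : MG V) (p : ℕ → V) (i : ℕ) : Prop :=
  G.IntoE (p (i - 1)) (p i) ∧ G.IntoE (p (i + 1)) (p i)

/-- The non-endpoint node at position `i` of `p` is a definite non-collider. -/
def DefNonColliderAt (G : MG V) (p : ℕ → V) (i : ℕ) : Prop :=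
  G.DirE (p i) (p (i - 1)) ∨ G.DirE (p i) (p (i + 1)) ∨
    (G.UndirE (p (i - 1)) (p i) ∧ G.UndirE (p i) (p (i + 1)) ∧
      ¬ G.Adj (p (i - 1)) (p (i + 1)))

/-- A definite status path. -/
def DefStatus (G : MG V) (p : ℕ → V) (n : ℕ) : Prop :=
  ∀ i, 1 ≤ i → i < n → G.ColliderAt p i ∨ G.DefNonColliderAt p i

/-- The set `W` blocks the path `p`: some non-collider on `p` is in `W`, or some
collider on `p` has no descendant in `W`. -/
def Blocks (G : MG V) (W : Set V) (p : ℕ → V) (n : ℕ) : Prop :=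
  ∃ i, 1 ≤ i ∧ i < n ∧
    ((¬ G.ColliderAt p i ∧ p i ∈ W) ∨
      (G.ColliderAt p i ∧ ∀ d, G.Desc (p i) d → d ∉ W))

/-- Possible descendants (via possibly causal paths; every node is its own). -/
def PossDe (G : MG V) (A : Set V) : Set V :=
  A ∪ {b | ∃ a ∈ A, ∃ p n, G.IsPath p n ∧ G.PossCausal p n ∧ p 0 = a ∧ p n = b}

/-- Possible ancestors (via possibly causal paths; every node is its own). -/
def PossAn (G : MG V) (A : Set V) : Set V :=
  A ∪ {a | ∃ b ∈ A, ∃ p n, G.IsPath p n ∧ G.PossCausal p n ∧ p 0 = a ∧ p n = b}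

end MG

variable {V : Type}

/-- The path `p` is proper w.r.t. `X`: only its first node is in `X`. -/
def Proper (p : ℕ → V) (n : ℕ) (X : Set V) : Prop :=
  ∀ i, 1 ≤ i → i ≤ n → p i ∉ X

namespace MG

variable {V : Type}

/-- Possible mediators: the nodes other than those in `X` lying on proper possibly
causal paths from `X` to `Y`. -/
def PossMed (G : MG V) (X Y : Set V) : Set V :=
  {w | ∃ p n, G.IsPathFromTo p n X Y ∧ Proper p n X ∧ G.PossCausal p n ∧
      ∃ i, 1 ≤ i ∧ i ≤ n ∧ p i = w}

/-- The forbidden set: possible descendants of the possible mediators. -/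
def Forb (G : MG V) (X Y : Set V) : Set V := G.PossDe (G.PossMed X Y)

/-- Mediators: the nodes other than those in `X` lying on proper causal paths
from `X` to `Y`. -/
def Med (G : MG V) (X Y : Set V) : Set V :=
  {w | ∃ p n, G.IsPathFromTo p n X Y ∧ Proper p n X ∧ G.Causal p n ∧
      ∃ i, 1 ≤ i ∧ i ≤ n ∧ p i = w}

/-- The forbidden set of a DAG: descendants of the mediators. -/
def ForbD (G : MG V) (X Y : Set V) : Set V := G.De (G.Med X Y)

/-- Parents of a node. -/
def Pa (G : MG V) (b : V) : Set V := {a | G.DirE a b}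

/-- Parents of a set of nodes:  `(⋃ w ∈ W, Pa w) \ W`. -/
def PaSet (G : MG V) (W : Set V) : Set V := {a | ∃ w ∈ W, G.DirE a w} \ W

/-- No directed cycles. -/
def Acyclic (G : MG V) : Prop := ∀ a, ¬ Relation.TransGen G.DirE a a

/-- A DAG: all edges directed, no directed cycles. -/
def IsDAG (G : MG V) : Prop :=
  (∀ a b, G.Adj a b → G.DirE a b ∨ G.DirE b a) ∧ G.Acyclic

/-- A partially directed acyclic graph: edges are `→` or `−`, no directed cycles. -/
def IsPDG (G : MG V) : Prop :=
  (∀ a b, G.Adj a b →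
      G.DirE a b ∨ G.DirE b a ∨ (G.m a b = Mark.tail ∧ G.m b a = Mark.tail)) ∧
    G.Acyclic

/-- `a → b ← c` is an unshielded collider. -/
def UnshieldedCollider (G : MG V) (a b c : V) : Prop :=
  G.DirE a b ∧ G.DirE c b ∧ a ≠ c ∧ ¬ G.Adj a c

/-- The class `[G]` of DAGs represented by a partially directed graph `G`: the DAGs
with the same nodes, adjacencies and unshielded colliders as `G` in which every
directed edge of `G` is directed the same way. -/
def rep (G : MG V) : Set (MG V) :=
  {D | D.IsDAG ∧ (∀ a b, D.Adj a b ↔ G.Adj a b) ∧ (∀ a b, G.DirE a b → D.DirE a b) ∧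
      ∀ a b c, (D.UnshieldedCollider a b c ↔ G.UnshieldedCollider a b c)}

/-- A maximally oriented PDAG (MPDAG): a PDAG, representing a nonempty class of
DAGs, whose orientations are complete (every undirected edge is oriented both
ways by DAGs in the represented class). -/
def IsMPDAG (G : MG V) : Prop :=
  G.IsPDG ∧ G.rep.Nonempty ∧
    ∀ a b, G.UndirE a b → (∃ D ∈ G.rep, D.DirE a b) ∧ ∃ D ∈ G.rep, D.DirE b a

end MG

section Density

variable {V : Type} [Fintype V] [DecidableEq V]

/-- Override the coordinates of `v` in `A` by the values `w`. -/
noncomputable def override (v : V → ℝ) (A : Finset V) (w : {x : V // x ∈ A} → ℝ) :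
    V → ℝ :=
  fun i => if h : i ∈ A then w ⟨i, h⟩ else v i

/-- The marginal density of the coordinates in `A` (integrating out `Aᶜ`). -/
noncomputable def marg (f : (V → ℝ) → ℝ≥0∞) (A : Finset V) (v : V → ℝ) : ℝ≥0∞ :=
  ∫⁻ w : {x : V // x ∈ Aᶜ} → ℝ, f (override v Aᶜ w)

/-- The conditional density `f(a | b)` of the coordinates in `A` given those in `B`. -/
noncomputable def condD (f : (V → ℝ) → ℝ≥0∞) (A B : Finset V) (v : V → ℝ) : ℝ≥0∞ :=
  marg f (A ∪ B) v / marg f B v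

/-- A (strictly positive) joint density on `V → ℝ`. -/
def IsDensity (f : (V → ℝ) → ℝ≥0∞) : Prop :=
  Measurable f ∧ (∫⁻ v : V → ℝ, f v) = 1 ∧ ∀ v, f v ≠ 0 ∧ f v ≠ ⊤

/-- A family of interventional densities: `obs` is the observational density
`f(v)`, and `int X x` is the interventional density `f(v | do(X = x))`. -/
structure IntFamily (V : Type) [Fintype V] [DecidableEq V] where
  obs : (V → ℝ) → ℝ≥0∞
  int : Finset V → (V → ℝ) → (V → ℝ) → ℝ≥0∞

-- Parents of a node, as a finset.
open Classical in
noncomputable def paFin (G : MG V) (i : V) : Finset V :=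
  Finset.univ.filter fun j => G.DirE j i

-- The family `F` is consistent with the causal DAG `G` (i.e. `G` is a causal
-- Bayesian network compatible with `F`): every interventional density satisfies
-- the truncated factorization.
open Classical in
def Consistent (F : IntFamily V) (G : MG V) : Prop :=
  (∀ x, F.int ∅ x = F.obs) ∧
    ∀ (X : Finset V) (x v : V → ℝ),
      F.int X x v =
        if ∀ i ∈ X, v i = x i then
          ∏ i ∈ Xᶜ, condD F.obs {i} (paFin G i) v
        else 0

/-- The conditional interventional density `f(a | do(x), z)` (where the value of
the intervention `do(X = x)` is read off from `v`). -/
noncomputable def doCond (F : IntFamily V) (X A Z : Finset V) (v : V → ℝ) : ℝ≥0∞ :=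
  marg (F.int X v) (A ∪ Z ∪ X) v / marg (F.int X v) (Z ∪ X) v

/-- The conditional adjustment functional
`∫ f(y | x, z, s) f(s | z) ds`  (resp. `f(y | x, z)` if `S = ∅`). -/
noncomputable def adjRHS (f : (V → ℝ) → ℝ≥0∞) (X Y Z S : Finset V) (v : V → ℝ) :
    ℝ≥0∞ :=
  if S = ∅ then condD f Y (X ∪ Z) v
  else
    ∫⁻ w : {x : V // x ∈ S} → ℝ,
      condD f Y (X ∪ Z ∪ S) (override v S w) * condD f S Z (override v S w)

/-- `S` is a conditional adjustment set relative to `(X, Y, Z)` in the causal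
MPDAG `G`: for every density consistent with `G` (i.e. with every DAG in `[G]`),
`f(y | do(x), z)` is given by the conditional adjustment functional. -/
def CondAdjSet (G : MG V) (X Y Z S : Finset V) : Prop :=
  ∀ F : IntFamily V, IsDensity F.obs → (∀ D ∈ G.rep, Consistent F D) →
    ∀ v : V → ℝ, doCond F X Y Z v = adjRHS F.obs X Y Z S v

/-- `S` is a conditional adjustment set relative to `(X, Y, Z)` in the causal DAG `D`. -/
def CondAdjSetDAG (D : MG V) (X Y Z S : Finset V) : Prop :=
  ∀ F : IntFamily V, IsDensity F.obs → Consistent F D →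
    ∀ v : V → ℝ, doCond F X Y Z v = adjRHS F.obs X Y Z S v

/-- `W` is an (unconditional) adjustment set relative to `(X, Y)` in the causal MPDAG `G`. -/
def AdjSet (G : MG V) (X Y W : Finset V) : Prop :=
  ∀ F : IntFamily V, IsDensity F.obs → (∀ D ∈ G.rep, Consistent F D) →
    ∀ v : V → ℝ, doCond F X Y ∅ v = adjRHS F.obs X Y ∅ W v

end Density

section Criteria

variable {V : Type}

/-- Every proper possibly causal path from `X` to `Y` in `G` starts with a
directed edge out of `X`. -/
def StartsDirected (G : MG V) (X Y : Set V) : Prop :=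
  ∀ p n, G.IsPathFromTo p n X Y → Proper p n X → G.PossCausal p n → G.DirE (p 0) (p 1)

/-- `W` blocks all proper non-causal definite status paths from `X` to `Y` in `G`. -/
def BlocksNonCausal (G : MG V) (X Y W : Set V) : Prop :=
  ∀ p n, G.IsPathFromTo p n X Y → Proper p n X → ¬ G.PossCausal p n →
    G.DefStatus p n → G.Blocks W p n

/-- The conditional adjustment criterion relative to `(X, Y, Z)` in an MPDAG. -/
def CondAdjCrit (G : MG V) (X Y Z S : Set V) : Prop :=
  StartsDirected G X Y ∧ S ∩ G.Forb X Y = ∅ ∧ BlocksNonCausal G X Y (S ∪ Z)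

/-- The (unconditional) adjustment criterion relative to `(X, Y)` in an MPDAG. -/
def AdjCrit (G : MG V) (X Y W : Set V) : Prop :=
  StartsDirected G X Y ∧ W ∩ G.Forb X Y = ∅ ∧ BlocksNonCausal G X Y W

/-- `W` blocks all proper non-causal paths from `X` to `Y` in a DAG. -/
def BlocksNonCausalD (G : MG V) (X Y W : Set V) : Prop :=
  ∀ p n, G.IsPathFromTo p n X Y → Proper p n X → ¬ G.Causal p n → G.Blocks W p n

/-- The conditional adjustment criterion relative to `(X, Y, Z)` in a DAG. -/
def CondAdjCritDAG (G : MG V) (X Y Z S : Set V) : Prop :=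
  S ∩ G.ForbD X Y = ∅ ∧ BlocksNonCausalD G X Y (S ∪ Z)

end Criteria

/-- A set, regarded as a finset (the node type is finite). -/
noncomputable def setFin {V : Type} [Fintype V] (s : Set V) : Finset V :=
  s.toFinite.toFinset

end CondAdj

theorem test_dummy : True := trivial

/-!
Take a shortest proper possibly causal path `p` from `X` to `Y` that starts with an
undirected edge and avoids `Z`. By minimality, `p 0` and `p 2` can only be adjacent
through `p 0 → p 2`, and no other two nodes at distance two on `p` are adjacent. In a DAG
of `[G]`, an edge `p i → p (i + 1)` therefore propagates to `p (i + 1) → p (i + 2)`, since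
otherwise `p (i + 1)` would be a new unshielded collider. It remains to find DAGs of `[G]`
orienting the first two edges as `p 0 → p 1 → p 2` and as `p 0 ← p 1 → p 2`. Both come
from gluing two DAGs of `[G]`: one on the edges touching a set `A` closed under
descendants, the other on the remaining edges.
-/

namespace CondAdj

namespace MG

variable {V : Type} {G D D' : MG V}

lemma DirE.adj {a b : V} (h : D.DirE a b) : D.Adj a b := by
  simp [Adj, h.1]

lemma Acyclic.not_desc_of_dirE (hD : D.Acyclic) {a b : V} (h : D.DirE a b) : ¬ D.Desc b a :=
  fun hba => hD a (Relation.TransGen.head' h hba)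

lemma rep_adj (hD : D ∈ G.rep) {a b : V} : D.Adj a b ↔ G.Adj a b := hD.2.1 a b

lemma rep_dirE (hD : D ∈ G.rep) {a b : V} (h : G.DirE a b) : D.DirE a b := hD.2.2.1 a b h

lemma rep_dirE_or_dirE (hD : D ∈ G.rep) {a b : V} (h : G.Adj a b) :
    D.DirE a b ∨ D.DirE b a :=
  hD.1.1 a b ((rep_adj hD).mpr h)

/-- Meek's rule R1 inside a DAG of `[G]`: reversing `b − c` would create an unshielded
collider `a → b ← c` that `G` does not have. -/
lemma rep_dirE_of_not_adj (hD : D ∈ G.rep) {a b c : V} (hab : D.DirE a b)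
    (hbc : G.Adj b c) (hcb : ¬ G.DirE c b) (hac : a ≠ c) (hnadj : ¬ G.Adj a c) :
    D.DirE b c := by
  refine (rep_dirE_or_dirE hD hbc).resolve_right fun hcb' => hcb ?_
  exact ((hD.2.2.2 a b c).mp ⟨hab, hcb', hac, fun h => hnadj ((rep_adj hD).mp h)⟩).2.1

lemma IsMPDAG.exists_rep_dirE (hG : G.IsMPDAG) {a b : V} (hab : G.Adj a b)
    (hba : ¬ G.IntoE b a) : ∃ D ∈ G.rep, D.DirE a b := by
  obtain ⟨⟨hedge, -⟩, ⟨D, hD⟩, hmax⟩ := hG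
  rcases hedge a b hab with h | h | h
  · exact ⟨D, hD, rep_dirE hD h⟩
  · exact absurd h.1 hba
  · exact (hmax a b (Or.inl h)).1

open Classical in
noncomputable def glue (D D' : MG V) (A : Set V) : MG V where
  m u v := if u ∈ A ∨ v ∈ A then D.m u v else D'.m u v
  none_symm a b := by
    by_cases h : a ∈ A ∨ b ∈ A
    · simpa only [if_pos h, if_pos h.symm] using D.none_symm a b
    · simpa only [if_neg h, if_neg (mt Or.symm h)] using D'.none_symm a b
  irrefl a := by
    by_cases h : a ∈ A ∨ a ∈ A
    · simpa only [if_pos h] using D.irrefl a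
    · simpa only [if_neg h] using D'.irrefl a

section Glue

variable {A : Set V}

lemma glue_adj_iff (hD : D ∈ G.rep) (hD' : D' ∈ G.rep) {u v : V} :
    (glue D D' A).Adj u v ↔ G.Adj u v := by
  by_cases h : u ∈ A ∨ v ∈ A
  · simpa only [Adj, glue, if_pos h] using rep_adj hD
  · simpa only [Adj, glue, if_neg h] using rep_adj hD'

lemma glue_dirE_iff_of_mem {u v : V} (h : u ∈ A ∨ v ∈ A) :
    (glue D D' A).DirE u v ↔ D.DirE u v := by
  simp only [DirE, glue, if_pos h, if_pos h.symm]

lemma glue_dirE_iff_of_not_mem {u v : V} (hu : u ∉ A) (hv : v ∉ A) :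
    (glue D D' A).DirE u v ↔ D'.DirE u v := by
  simp only [DirE, glue, hu, hv, or_self, if_false]

variable (hA : ∀ a b, a ∈ A → D.DirE a b → b ∈ A)
include hA

lemma glue_dirE_of_mem_left {u v : V} (h : (glue D D' A).DirE u v) (hu : u ∈ A) :
    D.DirE u v ∧ v ∈ A := by
  have huv := (glue_dirE_iff_of_mem (Or.inl hu)).mp h
  exact ⟨huv, hA u v hu huv⟩

lemma glue_dirE_of_not_mem_right {u v : V} (h : (glue D D' A).DirE u v) (hv : v ∉ A) :
    D'.DirE u v ∧ u ∉ A := by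
  by_cases hu : u ∈ A
  · exact absurd (glue_dirE_of_mem_left hA h hu).2 hv
  · exact ⟨(glue_dirE_iff_of_not_mem hu hv).mp h, hu⟩

lemma glue_dirE_of_dirE_right (hD : D ∈ G.rep) (hD' : D' ∈ G.rep) {u v : V}
    (h : D'.DirE u v) (hu : u ∉ A) : (glue D D' A).DirE u v := by
  by_cases hv : v ∈ A
  · refine (glue_dirE_iff_of_mem (Or.inr hv)).mpr ?_
    refine (rep_dirE_or_dirE hD ((rep_adj hD').mp h.adj)).resolve_right fun hvu => ?_
    exact hu (hA v u hv hvu)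
  · exact (glue_dirE_iff_of_not_mem hu hv).mpr h

omit hA in
lemma glue_dirE_of_dirE_of_dirE {u v : V} (h : D.DirE u v) (h' : D'.DirE u v) :
    (glue D D' A).DirE u v := by
  by_cases huv : u ∈ A ∨ v ∈ A
  · exact (glue_dirE_iff_of_mem huv).mpr h
  · push Not at huv
    exact (glue_dirE_iff_of_not_mem huv.1 huv.2).mpr h'

/-- A directed path of the glued graph starting in `A` stays in `A`, where it is a path
of `D`; one ending outside `A` never visits `A`, hence is a path of `D'`. -/
lemma glue_acyclic (hD : D.Acyclic) (hD' : D'.Acyclic) : (glue D D' A).Acyclic := by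
  have inside : ∀ a b, Relation.TransGen (glue D D' A).DirE a b → a ∈ A →
      b ∈ A ∧ Relation.TransGen D.DirE a b := by
    intro a b h
    induction h with
    | single e =>
      exact fun ha => ⟨(glue_dirE_of_mem_left hA e ha).2, .single (glue_dirE_of_mem_left hA e ha).1⟩
    | tail _ e ih =>
      intro ha
      obtain ⟨hb, hab⟩ := ih ha
      obtain ⟨e', hc⟩ := glue_dirE_of_mem_left hA e hb
      exact ⟨hc, hab.tail e'⟩
  have outside : ∀ a b, Relation.TransGen (glue D D' A).DirE a b → b ∉ A →
      Relation.TransGen D'.DirE a b := by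
    intro a b h
    induction h with
    | single e => exact fun hb => .single (glue_dirE_of_not_mem_right hA e hb).1
    | tail _ e ih =>
      intro hc
      obtain ⟨e', hb⟩ := glue_dirE_of_not_mem_right hA e hc
      exact (ih hb).tail e'
  intro a ha
  by_cases haA : a ∈ A
  · exact hD a (inside a a ha haA).2
  · exact hD' a (outside a a ha haA)

lemma glue_mem_rep (hD : D ∈ G.rep) (hD' : D' ∈ G.rep) : glue D D' A ∈ G.rep := by
  refine ⟨⟨fun u v huv => ?_, glue_acyclic hA hD.1.2 hD'.1.2⟩, fun u v => glue_adj_iff hD hD',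
    fun u v h => glue_dirE_of_dirE_of_dirE (rep_dirE hD h) (rep_dirE hD' h),
    fun x y z => ⟨?_, ?_⟩⟩
  · have hG := (glue_adj_iff hD hD').mp huv
    by_cases h : u ∈ A ∨ v ∈ A
    · rw [glue_dirE_iff_of_mem h, glue_dirE_iff_of_mem h.symm]
      exact rep_dirE_or_dirE hD hG
    · push Not at h
      rw [glue_dirE_iff_of_not_mem h.1 h.2, glue_dirE_iff_of_not_mem h.2 h.1]
      exact rep_dirE_or_dirE hD' hG
  · rintro ⟨hxy, hzy, hxz, hnadj⟩
    have hnadjG : ¬ G.Adj x z := fun h => hnadj ((glue_adj_iff hD hD').mpr h)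
    by_cases hy : y ∈ A
    · exact (hD.2.2.2 x y z).mp ⟨(glue_dirE_iff_of_mem (Or.inr hy)).mp hxy,
        (glue_dirE_iff_of_mem (Or.inr hy)).mp hzy, hxz, fun h => hnadjG ((rep_adj hD).mp h)⟩
    · exact (hD'.2.2.2 x y z).mp ⟨(glue_dirE_of_not_mem_right hA hxy hy).1,
        (glue_dirE_of_not_mem_right hA hzy hy).1, hxz, fun h => hnadjG ((rep_adj hD').mp h)⟩
  · rintro ⟨hxy, hzy, hxz, hnadj⟩
    exact ⟨glue_dirE_of_dirE_of_dirE (rep_dirE hD hxy) (rep_dirE hD' hxy),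
      glue_dirE_of_dirE_of_dirE (rep_dirE hD hzy) (rep_dirE hD' hzy), hxz,
      fun h => hnadj ((glue_adj_iff hD hD').mp h)⟩

end Glue

lemma exists_rep_dirE_and_dirE (hD : D ∈ G.rep) (hD' : D' ∈ G.rep) {u v x y : V}
    (huv : D.DirE u v) (hxy : D'.DirE x y) (hx : ¬ D.Desc v x) :
    ∃ E ∈ G.rep, E.DirE u v ∧ E.DirE x y := by
  have hA : ∀ a b, a ∈ {w | D.Desc v w} → D.DirE a b → b ∈ {w | D.Desc v w} :=
    fun _ _ ha hab => Relation.ReflTransGen.tail ha hab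
  exact ⟨glue D D' _, glue_mem_rep hA hD hD',
    (glue_dirE_iff_of_mem (Or.inr Relation.ReflTransGen.refl)).mpr huv,
    glue_dirE_of_dirE_right hA hD hD' hxy hx⟩

lemma rep_dirE_propagate (hD : D ∈ G.rep) {p : ℕ → V} {n k : ℕ} (hp : G.IsPath p n)
    (hpc : G.PossCausal p n) (hnadj : ∀ i, k < i → i < n → ¬ G.Adj (p (i - 1)) (p (i + 1)))
    (hk : D.DirE (p k) (p (k + 1))) : ∀ i, k ≤ i → i < n → D.DirE (p i) (p (i + 1)) := by
  intro i hki
  induction i, hki using Nat.le_induction with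
  | base => exact fun _ => hk
  | succ i hki ih =>
    intro hin
    refine rep_dirE_of_not_adj hD (ih (by omega)) (hp.2.2 (i + 1) hin)
      (fun h => hpc (i + 1) (i + 2) (by omega) (by omega) h.1) ?_ ?_
    · exact fun h => absurd (hp.2.1 i (by omega) (i + 2) (by omega) h) (by omega)
    · simpa using hnadj (i + 1) (by omega) hin

def IsUndirStartPossCausalPath (G : MG V) (X Y Z : Set V) (p : ℕ → V) (n : ℕ) : Prop :=
  G.IsPathFromTo p n X Y ∧ Proper p n X ∧ G.PossCausal p n ∧ G.UndirE (p 0) (p 1) ∧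
    ∀ i ≤ n, p i ∉ Z

namespace IsUndirStartPossCausalPath

variable {X Y Z : Set V} {p : ℕ → V} {n : ℕ}

lemma comp_strictMono (hp : G.IsUndirStartPossCausalPath X Y Z p n) {σ : ℕ → ℕ} {m : ℕ}
    (hσ : StrictMono σ) (hσ0 : σ 0 = 0) (hσm : σ m = n) (hm : 1 ≤ m)
    (hadj : ∀ i < m, G.Adj (p (σ i)) (p (σ (i + 1)))) (hstart : G.UndirE (p (σ 0)) (p (σ 1))) :
    G.IsUndirStartPossCausalPath X Y Z (p ∘ σ) m := by
  obtain ⟨⟨⟨-, hinj, -⟩, hX, hY⟩, hprop, hpc, -, hZ⟩ := hp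
  have hle : ∀ {j}, j ≤ m → σ j ≤ n := fun hj => hσm ▸ hσ.monotone hj
  refine ⟨⟨⟨hm, fun i hi j hj h => hσ.injective (hinj _ (hle hi) _ (hle hj) h), hadj⟩,
    by simpa [hσ0] using hX, by simpa [hσm] using hY⟩, fun i hi him => ?_,
    fun i j hij hj => hpc _ _ (hσ hij) (hle hj), hstart, fun i hi => hZ _ (hle hi)⟩
  have := hσ (show 0 < i by omega)
  exact hprop _ (by omega) (hle him)

lemma skip (hp : G.IsUndirStartPossCausalPath X Y Z p n) {i : ℕ} (hi : 1 ≤ i) (hin : i < n)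
    (hadj : G.Adj (p (i - 1)) (p (i + 1))) (hstart : i = 1 → G.UndirE (p 0) (p 2)) :
    ∃ q, G.IsUndirStartPossCausalPath X Y Z q (n - 1) := by
  let σ : ℕ → ℕ := fun j => if j < i then j else j + 1
  have hσ : StrictMono σ := strictMono_nat_of_lt_succ fun j => by
    simp only [σ]; split_ifs <;> omega
  refine ⟨p ∘ σ, hp.comp_strictMono hσ (by simp [σ]; omega)
    (by simp only [σ]; split_ifs <;> omega) (by omega)
    (fun j hj => ?_) ?_⟩
  · rcases lt_trichotomy (j + 1) i with h | h | h
    · simpa [σ, h, show j < i by omega] using hp.1.1.2.2 j (by omega)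
    · simpa [σ, show j < i by omega, ← h] using hadj
    · simpa [σ, show ¬ j < i by omega, show ¬ j + 1 < i by omega]
        using hp.1.1.2.2 (j + 1) (by omega)
  · rcases eq_or_lt_of_le hi with rfl | h
    · simpa [σ] using hstart rfl
    · simpa [σ, h, show 0 < i by omega] using hp.2.2.2.1

variable (hmin : ∀ q m, G.IsUndirStartPossCausalPath X Y Z q m → n ≤ m)
include hmin

lemma not_adj_of_minimal (hp : G.IsUndirStartPossCausalPath X Y Z p n) {i : ℕ} (hi : 2 ≤ i)
    (hin : i < n) : ¬ G.Adj (p (i - 1)) (p (i + 1)) := fun hadj => by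
  obtain ⟨q, hq⟩ := hp.skip (by omega) hin hadj (by omega)
  have := hmin q _ hq
  omega

lemma dirE_of_minimal (hG : G.IsPDG) (hp : G.IsUndirStartPossCausalPath X Y Z p n)
    (hn : 2 ≤ n) (hadj : G.Adj (p 0) (p 2)) : G.DirE (p 0) (p 2) := by
  rcases hG.1 _ _ hadj with h | h | h
  · exact h
  · exact absurd h.1 (hp.2.2.1 0 2 (by omega) hn)
  · obtain ⟨q, hq⟩ := hp.skip le_rfl (by omega) hadj fun _ => Or.inl h
    have := hmin q _ hq
    omega

lemma exists_rep_causal (hG : G.IsMPDAG) (hp : G.IsUndirStartPossCausalPath X Y Z p n) :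
    ∃ D ∈ G.rep, ∀ i < n, D.DirE (p i) (p (i + 1)) := by
  obtain ⟨D', hD', h01⟩ := (hG.2.2 _ _ hp.2.2.2.1).1
  rcases eq_or_lt_of_le hp.1.1.1 with rfl | hn
  · exact ⟨D', hD', fun i hi => by rwa [Nat.lt_one_iff.mp hi]⟩
  have hpc := hp.2.2.1
  have h21 : ¬ G.IntoE (p 2) (p 1) := hpc 1 2 (by omega) hn
  obtain ⟨D, hD, h01, h12⟩ : ∃ D ∈ G.rep, D.DirE (p 0) (p 1) ∧ D.DirE (p 1) (p 2) := by
    by_cases hadj : G.Adj (p 0) (p 2)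
    · obtain ⟨D, hD, hD12⟩ := hG.exists_rep_dirE (hp.1.1.2.2 1 hn) h21
      have hD02 := rep_dirE hD (dirE_of_minimal hmin hG.1 hp hn hadj)
      obtain ⟨E, hE, hE12, hE01⟩ :=
        exists_rep_dirE_and_dirE hD hD' hD12 h01 (hD.1.2.not_desc_of_dirE hD02)
      exact ⟨E, hE, hE01, hE12⟩
    · refine ⟨D', hD', h01, rep_dirE_of_not_adj hD' h01 (hp.1.1.2.2 1 hn) (fun h => h21 h.1)
        (fun h => absurd (hp.1.1.2.1 0 (by omega) 2 hn h) (by omega)) hadj⟩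
  refine ⟨D, hD, fun i hi => ?_⟩
  rcases Nat.eq_zero_or_pos i with rfl | hi0
  · exact h01
  · exact rep_dirE_propagate hD hp.1.1 hpc (fun j hj => not_adj_of_minimal hmin hp (by omega))
      h12 i hi0 hi

lemma exists_rep_reversed_first (hG : G.IsMPDAG) (hp : G.IsUndirStartPossCausalPath X Y Z p n) :
    ∃ D ∈ G.rep, D.DirE (p 1) (p 0) ∧ ∀ i, 1 ≤ i → i < n → D.DirE (p i) (p (i + 1)) := by
  obtain ⟨D, hD, h10⟩ := (hG.2.2 _ _ hp.2.2.2.1).2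
  rcases eq_or_lt_of_le hp.1.1.1 with rfl | hn
  · exact ⟨D, hD, h10, fun i hi hi' => absurd hi' (by omega)⟩
  obtain ⟨D₁, hD₁, hcausal⟩ := hp.exists_rep_causal hmin hG
  obtain ⟨E, hE, h10, h12⟩ :=
    exists_rep_dirE_and_dirE hD hD₁ h10 (hcausal 1 hn) (hD.1.2.not_desc_of_dirE h10)
  exact ⟨E, hE, h10, rep_dirE_propagate hE hp.1.1 hp.2.2.1
    (fun j hj => not_adj_of_minimal hmin hp (by omega)) h12⟩

end IsUndirStartPossCausalPath

end MG

end CondAdj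

theorem possCausal_undirected_two_dags_general
    {V : Type} (G : CondAdj.MG V) (hG : G.IsMPDAG) (X Y Z : Set V)
    (hpath : ∃ p n, G.IsPathFromTo p n X Y ∧ CondAdj.Proper p n X ∧
      G.PossCausal p n ∧ G.UndirE (p 0) (p 1) ∧ ∀ i ≤ n, p i ∉ Z) :
    ∃ p n, (G.IsPathFromTo p n X Y ∧ CondAdj.Proper p n X ∧ G.PossCausal p n ∧
        G.UndirE (p 0) (p 1) ∧ ∀ i ≤ n, p i ∉ Z) ∧
      (∃ D₁ ∈ G.rep, ∀ i < n, D₁.DirE (p i) (p (i + 1))) ∧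
      ∃ D₂ ∈ G.rep, D₂.DirE (p 1) (p 0) ∧
        ∀ i, 1 ≤ i → i < n → D₂.DirE (p i) (p (i + 1)) := by
  classical
  have hex : ∃ n p, G.IsUndirStartPossCausalPath X Y Z p n :=
    let ⟨p, n, hp⟩ := hpath; ⟨n, p, hp⟩
  obtain ⟨p, hp⟩ := Nat.find_spec hex
  have hmin : ∀ q m, G.IsUndirStartPossCausalPath X Y Z q m → Nat.find hex ≤ m :=
    fun q m hq => Nat.find_min' hex ⟨q, hq⟩
  exact ⟨p, _, hp, hp.exists_rep_causal hmin hG, hp.exists_rep_reversed_first hmin hG⟩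

/-- if there is a proper possibly causal path from `X` to `Y`
in the MPDAG `G` starting with an undirected edge and avoiding `Z`, then there
is one such path whose corresponding paths in two DAGs of `[G]` take the forms
`X → ⋯ → Y` and `X ← V₁ → ⋯ → Y` (`X ← Y` when the path is a single edge). -/
theorem possCausal_undirected_two_dags
    {V : Type} (G : CondAdj.MG V) (hG : G.IsMPDAG) (X Y Z : Set V)
    (hXY : Disjoint X Y) (hXZ : Disjoint X Z) (hYZ : Disjoint Y Z)
    (hpath : ∃ p n, G.IsPathFromTo p n X Y ∧ CondAdj.Proper p n X ∧
      G.PossCausal p n ∧ G.UndirE (p 0) (p 1) ∧ ∀ i ≤ n, p i ∉ Z) :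
    ∃ p n, (G.IsPathFromTo p n X Y ∧ CondAdj.Proper p n X ∧ G.PossCausal p n ∧
        G.UndirE (p 0) (p 1) ∧ ∀ i ≤ n, p i ∉ Z) ∧
      (∃ D₁ ∈ G.rep, ∀ i < n, D₁.DirE (p i) (p (i + 1))) ∧
      ∃ D₂ ∈ G.rep, D₂.DirE (p 1) (p 0) ∧
        ∀ i, 1 ≤ i → i < n → D₂.DirE (p i) (p (i + 1)) :=
  possCausal_undirected_two_dags_general G hG X Y Z hpath
end

section
/- Let X, Y, Z, and S be pairwise disjoint node sets in a DAG D with Z ∩ De(X,D) = ∅. Then S satisfies the conditional back-door criterion relative to (X,Y,Z) in D, i.e., S ∩ De(X,D) = ∅ and S ∪ Z blocks all proper back-door paths from X to Y in D, if and only if S ∪ Z satisfies the generalized back-door criterion relative to (X,Y) in D, i.e., (S ∪ Z) ∩ De(X,D) = ∅ and for every X ∈ X, the set S ∪ Z ∪ X ∖ {X} blocks all back-door paths from X to Y in D. -/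
open MeasureTheory
open scoped ENNReal

/-!
Suppose `(S ∪ Z ∪ X) \ {x}` leaves open a back-door path `p` from `x ∈ X` to `Y`. The part of `p`
after its last node in `X` is a proper back-door walk (that node, being conditioned on, is a
collider); its non-colliders avoid `S ∪ Z ∪ X`, and each collider has a descendant in `S ∪ Z` or in
`X`. At the last collider `c` of the second kind, replace the walk before `c` by a directed path
from `c` to its first node in `X`, traversed backwards: its nodes are descendants of `c`, hence not
in `S ∪ Z`, and its first edge points into `X`. The result is a proper back-door walk left open
by `S ∪ Z`, and cutting out its cycles yields such a path, which the conditional criterion forbids.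

Conversely, `S ∪ Z` is contained in `(S ∪ Z ∪ X) \ {x}` and agrees with it on the interior of a
proper path from `x`, so whatever blocks such a path given the larger set blocks it given `S ∪ Z`.
-/

theorem Nat.exists_greatest_of_le {P : ℕ → Prop} {m n : ℕ} (hm : P m) (hmn : m ≤ n) :
    ∃ k, m ≤ k ∧ k ≤ n ∧ P k ∧ ∀ j, k < j → j ≤ n → ¬ P j := by
  classical
  exact ⟨Nat.findGreatest P n, Nat.le_findGreatest hmn hm, Nat.findGreatest_le n,
    Nat.findGreatest_spec hmn hm, fun _ => Nat.findGreatest_is_greatest⟩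

namespace CondAdj

variable {V : Type} {X : Set V} {p q : ℕ → V} {n m i : ℕ}

/-- The walk `p 0, …, p n` continued by `q 1, q 2, …`; the lemmas assume `p n = q 0`. -/
def append (p : ℕ → V) (n : ℕ) (q : ℕ → V) : ℕ → V :=
  fun i => if i ≤ n then p i else q (i - n)

theorem append_of_le (p q : ℕ → V) (h : i ≤ n) : append p n q i = p i := if_pos h

theorem append_of_ge (hpq : p n = q 0) (h : n ≤ i) : append p n q i = q (i - n) := by
  unfold append
  split_ifs with h'
  · obtain rfl : i = n := le_antisymm h' h
    simpa using hpq
  · rfl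

theorem Proper.shift (h : Proper p n X) (k : ℕ) : Proper (fun i => p (k + i)) (n - k) X :=
  fun i h₁ h₂ => h (k + i) (by omega) (by omega)

theorem Proper.append (hp : Proper p n X) (hq : Proper q m X) (hpq : p n = q 0) :
    Proper (append p n q) (n + m) X := by
  intro i h₁ h₂
  rcases Nat.lt_or_ge n i with h | h
  · rw [append_of_ge hpq h.le]
    exact hq _ (by omega) (by omega)
  · rw [append_of_le p q h]
    exact hp i h₁ h

namespace MG

variable {G : MG V} {W W' : Set V} {a b : V} {f : ℕ → V} {j k t : ℕ}

theorem Adj.symm (h : G.Adj a b) : G.Adj b a := fun h' => h ((G.none_symm a b).2 h')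

theorem DirE.adj_s16 (h : G.DirE a b) : G.Adj a b := fun h' => by simp [h.1] at h'

theorem DirE.not_intoE (h : G.DirE a b) : ¬ G.IntoE b a := fun h' => by
  simp [IntoE, h.2] at h'

theorem IntoE.not_dirE (h : G.IntoE a b) : ¬ G.DirE b a := fun h' => h'.not_intoE h

theorem DirE.not_dirE (h : G.DirE a b) : ¬ G.DirE b a := fun h' => h.not_intoE h'.1

theorem IsDAG.dirE_of_not_intoE (hD : G.IsDAG) (hadj : G.Adj a b) (h : ¬ G.IntoE b a) :
    G.DirE a b :=
  (hD.1 a b hadj).resolve_right fun h' => h h'.1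

theorem desc_of_forall_dirE_succ (hf : ∀ s < t, G.DirE (f (s + 1)) (f s)) {s : ℕ}
    (hs : s ≤ t) : G.Desc (f t) (f s) := by
  induction t with
  | zero =>
    obtain rfl : s = 0 := by omega
    exact .refl
  | succ t ih =>
    rcases Nat.lt_or_ge t s with h | h
    · obtain rfl : s = t + 1 := by omega
      exact .refl
    · exact .head (hf t (by omega)) (ih (fun r hr => hf r (by omega)) h)

/-- A directed path from `a` to `X`, read backwards from its first node in `X`. -/
theorem Desc.exists_proper_reverse_chain (h : G.Desc a b) (hb : b ∈ X) :
    ∃ f t, f 0 ∈ X ∧ f t = a ∧ (∀ s < t, G.DirE (f (s + 1)) (f s)) ∧ Proper f t X := by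
  classical
  induction h using Relation.ReflTransGen.head_induction_on with
  | refl => exact ⟨fun _ => b, 0, hb, rfl, by simp, fun s h₁ h₂ => by omega⟩
  | @head a c hac _ ih =>
    by_cases ha : a ∈ X
    · exact ⟨fun _ => a, 0, ha, rfl, by simp, fun s h₁ h₂ => by omega⟩
    obtain ⟨f, t, hf0, hft, hf, hprop⟩ := ih
    refine ⟨Function.update f (t + 1) a, t + 1, by simpa using hf0, by simp, fun s hs => ?_,
      fun s h₁ h₂ => ?_⟩
    · rcases Nat.lt_or_ge s t with h | h
      · simpa [Function.update_of_ne (show s ≠ t + 1 by omega),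
          Function.update_of_ne (show s + 1 ≠ t + 1 by omega)] using hf s h
      · obtain rfl : s = t := by omega
        simpa [hft] using hac
    · rcases Nat.lt_or_ge t s with h | h
      · obtain rfl : s = t + 1 := by omega
        simpa using ha
      · simpa [Function.update_of_ne (show s ≠ t + 1 by omega)] using hprop s h₁ h

def IsWalk (G : MG V) (p : ℕ → V) (n : ℕ) : Prop := ∀ i < n, G.Adj (p i) (p (i + 1))

def OpenAt (G : MG V) (W : Set V) (p : ℕ → V) (i : ℕ) : Prop :=
  (G.ColliderAt p i → ∃ d, G.Desc (p i) d ∧ d ∈ W) ∧ (¬ G.ColliderAt p i → p i ∉ W)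

def IsOpen (G : MG V) (W : Set V) (p : ℕ → V) (n : ℕ) : Prop :=
  ∀ i, 1 ≤ i → i < n → G.OpenAt W p i

structure IsProperBackdoorWalk (G : MG V) (X : Set V) (p : ℕ → V) (n : ℕ) : Prop where
  one_le : 1 ≤ n
  isWalk : G.IsWalk p n
  start_mem : p 0 ∈ X
  proper : Proper p n X
  backdoor : ¬ G.DirE (p 0) (p 1)

theorem not_blocks_iff : ¬ G.Blocks W p n ↔ G.IsOpen W p n := by
  simp only [Blocks, IsOpen, OpenAt, not_exists, not_and, not_or, not_forall, not_not,
    exists_prop]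
  exact forall₃_congr fun _ _ _ => and_comm

theorem IsPath.isWalk (h : G.IsPath p n) : G.IsWalk p n := h.2.2

theorem IsWalk.shift (h : G.IsWalk p n) (k : ℕ) : G.IsWalk (fun i => p (k + i)) (n - k) :=
  fun i hi => h (k + i) (by omega)

theorem IsWalk.append (hp : G.IsWalk p n) (hq : G.IsWalk q m) (hpq : p n = q 0) :
    G.IsWalk (append p n q) (n + m) := by
  intro i hi
  rcases Nat.lt_or_ge i n with h | h
  · rw [append_of_le p q h.le, append_of_le p q h]
    exact hp i h
  · rw [append_of_ge hpq h, append_of_ge hpq (by omega), show i + 1 - n = i - n + 1 by omega]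
    exact hq _ (by omega)

theorem isWalk_of_forall_dirE_succ (hf : ∀ s < t, G.DirE (f (s + 1)) (f s)) : G.IsWalk f t :=
  fun s hs => (hf s hs).adj_s16.symm

theorem openAt_congr (h₁ : p (i - 1) = q (j - 1)) (h₂ : p i = q j)
    (h₃ : p (i + 1) = q (j + 1)) :
    G.OpenAt W p i ↔ G.OpenAt W q j := by
  simp only [OpenAt, ColliderAt, h₁, h₂, h₃]

theorem OpenAt.colliderAt_of_mem (h : G.OpenAt W p i) (hi : p i ∈ W) : G.ColliderAt p i :=
  by_contra fun hc => h.2 hc hi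

theorem openAt_of_dirE_pred (h : G.DirE (p i) (p (i - 1))) (hW : p i ∉ W) : G.OpenAt W p i :=
  ⟨fun hc => absurd hc.1 h.not_intoE, fun _ => hW⟩

theorem OpenAt.colliderAt_of_not_openAt (h : G.OpenAt (W ∪ X) p i) (hW : ¬ G.OpenAt W p i) :
    G.ColliderAt p i ∧ (∀ d, G.Desc (p i) d → d ∉ W) ∧ ∃ x ∈ X, G.Desc (p i) x := by
  by_cases hc : G.ColliderAt p i
  · have hnoW : ∀ d, G.Desc (p i) d → d ∉ W := fun d hd hdW =>
      hW ⟨fun _ => ⟨d, hd, hdW⟩, fun h => absurd hc h⟩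
    obtain ⟨d, hd, hdW | hdX⟩ := h.1 hc
    · exact absurd hdW (hnoW d hd)
    · exact ⟨hc, hnoW, d, hdX, hd⟩
  · exact absurd ⟨fun h => absurd h hc, fun _ h' => h.2 hc (Or.inl h')⟩ hW

theorem IsOpen.mono (h : G.IsOpen W p n) (hW : W ⊆ W')
    (hint : ∀ i, 1 ≤ i → i < n → p i ∈ W' → p i ∈ W) : G.IsOpen W' p n := fun i h₁ h₂ =>
  ⟨fun hc => ((h i h₁ h₂).1 hc).imp fun _ hd => ⟨hd.1, hW hd.2⟩,
    fun hc hi => (h i h₁ h₂).2 hc (hint i h₁ h₂ hi)⟩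

theorem isOpen_shift (h : ∀ i, k < i → i < n → G.OpenAt W p i) :
    G.IsOpen W (fun i => p (k + i)) (n - k) := fun i h₁ h₂ =>
  (openAt_congr (p := fun i => p (k + i)) (q := p) (by congr 1; omega) rfl rfl).2
    (h (k + i) (by omega) (by omega))

theorem IsOpen.append (hp : G.IsOpen W p n) (hq : G.IsOpen W q m) (hpq : p n = q 0)
    (hjoin : 0 < m → G.OpenAt W (append p n q) n) : G.IsOpen W (append p n q) (n + m) := by
  intro i h₁ h₂
  rcases lt_trichotomy i n with h | rfl | h
  · exact (openAt_congr (append_of_le p q (by omega)) (append_of_le p q h.le)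
      (append_of_le p q h)).2 (hp i h₁ h)
  · exact hjoin (by omega)
  · refine (openAt_congr (j := i - n) ?_ (append_of_ge hpq h.le) ?_).2 (hq _ (by omega) (by omega))
    · rw [append_of_ge hpq (by omega)]
      congr 1
      omega
    · rw [append_of_ge hpq (by omega)]
      congr 1
      omega

theorem isOpen_of_forall_dirE_succ (hf : ∀ s < t, G.DirE (f (s + 1)) (f s))
    (hW : ∀ s < t, f s ∉ W) : G.IsOpen W f t := fun s h₁ h₂ =>
  openAt_of_dirE_pred (by simpa [Nat.sub_add_cancel h₁] using hf (s - 1) (by omega)) (hW s h₂)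

theorem exists_properBackdoorWalk_suffix (hp : G.IsWalk p n) (hp0 : p 0 ∈ X) (hpn : p n ∉ X)
    (hbd : ¬ G.DirE (p 0) (p 1)) (hopen : G.IsOpen W p n)
    (hXW : ∀ i, 1 ≤ i → i < n → p i ∈ X → p i ∈ W) :
    ∃ q m, G.IsProperBackdoorWalk X q m ∧ G.IsOpen W q m ∧ q m = p n := by
  obtain ⟨k, -, hkn, hk, hlast⟩ :=
    Nat.exists_greatest_of_le (P := (p · ∈ X)) hp0 (Nat.zero_le n)
  have hkn : k < n := lt_of_le_of_ne hkn (by rintro rfl; exact hpn hk)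
  have hbd' : ¬ G.DirE (p k) (p (k + 1)) := by
    rcases Nat.eq_zero_or_pos k with rfl | hk0
    · exact hbd
    · exact ((hopen k hk0 hkn).colliderAt_of_mem (hXW k hk0 hkn hk)).2.not_dirE
  refine ⟨fun i => p (k + i), n - k,
    ⟨by omega, hp.shift k, hk, fun i h₁ h₂ => hlast _ (by omega) (by omega), hbd'⟩,
    isOpen_shift fun i h₁ h₂ => hopen i (by omega) h₂, by simp only; congr 1; omega⟩

theorem exists_properBackdoorWalk_of_desc (hp : G.IsWalk p n) (hn : 1 ≤ n)
    (hprop : Proper p n X) (hopen : G.IsOpen W p n) {x : V} (hx : G.Desc (p 0) x) (hxX : x ∈ X)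
    (hp0 : p 0 ∉ X) (hW : ∀ d, G.Desc (p 0) d → d ∉ W) :
    ∃ r N, G.IsProperBackdoorWalk X r N ∧ G.IsOpen W r N ∧ r N = p n := by
  obtain ⟨f, t, hf0, hft, hf, hfprop⟩ := hx.exists_proper_reverse_chain hxX
  have ht : 1 ≤ t := Nat.one_le_iff_ne_zero.2 fun h => hp0 (hft ▸ h ▸ hf0)
  have hfW : ∀ s ≤ t, f s ∉ W := fun s hs => hW _ (hft ▸ desc_of_forall_dirE_succ hf hs)
  have hjoin : G.OpenAt W (append f t p) t := by
    refine openAt_of_dirE_pred ?_ (by rw [append_of_le f p le_rfl]; exact hfW t le_rfl)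
    rw [append_of_le f p le_rfl, append_of_le f p (by omega)]
    simpa [Nat.sub_add_cancel ht] using hf (t - 1) (by omega)
  refine ⟨append f t p, t + n, ⟨by omega, (isWalk_of_forall_dirE_succ hf).append hp hft,
    by rw [append_of_le f p (Nat.zero_le t)]; exact hf0, hfprop.append hprop hft, ?_⟩,
    (isOpen_of_forall_dirE_succ hf fun s hs => hfW s hs.le).append hopen hft fun _ => hjoin, ?_⟩
  · rw [append_of_le f p (Nat.zero_le t), append_of_le f p ht]
    exact (hf 0 (by omega)).not_dirE
  · rw [append_of_ge hft (by omega), Nat.add_sub_cancel_left]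

theorem IsProperBackdoorWalk.exists_isOpen (hp : G.IsProperBackdoorWalk X p n)
    (hopen : G.IsOpen (W ∪ X) p n) :
    ∃ r N, G.IsProperBackdoorWalk X r N ∧ G.IsOpen W r N ∧ r N = p n := by
  by_cases hbad : ∃ i, 1 ≤ i ∧ i < n ∧ ¬ G.OpenAt W p i
  swap
  · push Not at hbad
    exact ⟨p, n, hp, hbad, rfl⟩
  obtain ⟨i₀, hi₀, hi₀n, hbad₀⟩ := hbad
  obtain ⟨i, -, -, ⟨hi, hin, hbadi⟩, hlast⟩ :=
    Nat.exists_greatest_of_le (P := fun i => 1 ≤ i ∧ i < n ∧ ¬ G.OpenAt W p i)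
      ⟨hi₀, hi₀n, hbad₀⟩ hi₀n.le
  obtain ⟨-, hnoW, x, hxX, hx⟩ := (hopen i hi hin).colliderAt_of_not_openAt hbadi
  have hopen' : G.IsOpen W (fun j => p (i + j)) (n - i) := isOpen_shift fun j h₁ h₂ => by
    by_contra h
    exact hlast j h₁ h₂.le ⟨by omega, h₂, h⟩
  obtain ⟨r, N, hr, hropen, hrN⟩ := exists_properBackdoorWalk_of_desc (hp.isWalk.shift i)
    (by omega) (hp.proper.shift i) hopen' hx hxX (hp.proper i hi hin.le) hnoW
  exact ⟨r, N, hr, hropen, by rw [hrN, Nat.add_sub_cancel' hin.le]⟩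

theorem IsDAG.exists_colliderAt_desc (hD : G.IsDAG) (hp : G.IsWalk p n) (hjn : j < n)
    (hi : G.DirE (p i) (p (i + 1))) (hj : G.DirE (p (j + 1)) (p j)) (hij : i ≤ j) :
    ∃ k, i < k ∧ k ≤ j ∧ G.ColliderAt p k ∧ G.Desc (p i) (p k) := by
  induction h : j - i generalizing i with
  | zero =>
    obtain rfl : i = j := by omega
    exact absurd hj hi.not_dirE
  | succ d ih =>
    by_cases hnext : G.IntoE (p (i + 1 + 1)) (p (i + 1))
    · exact ⟨i + 1, by omega, by omega, ⟨by rw [Nat.add_sub_cancel]; exact hi.1, hnext⟩,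
        .single hi⟩
    · obtain ⟨k, hik, hkj, hk, hdesc⟩ :=
        ih (hD.dirE_of_not_intoE (hp (i + 1) (by omega)) hnext) (by omega) (by omega)
      exact ⟨k, by omega, hkj, hk, .head hi hdesc⟩

theorem IsDAG.openAt_append_shift (hD : G.IsDAG) (hp : G.IsWalk p n) (hopen : G.IsOpen W p n)
    (hi : 1 ≤ i) (hij : i < j) (hjn : j < n) (heq : p i = p j) :
    G.OpenAt W (append p i fun k => p (j + k)) i := by
  have hq₁ := append_of_le p (fun k => p (j + k)) (show i - 1 ≤ i by omega)
  have hq₂ := append_of_le p (fun k => p (j + k)) (le_refl i)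
  have hq₃ : append p i (fun k => p (j + k)) (i + 1) = p (j + 1) := by
    rw [append_of_ge (q := fun k => p (j + k)) heq (by omega)]
    congr 1
    omega
  have hcol : G.ColliderAt (append p i fun k => p (j + k)) i ↔
      G.IntoE (p (i - 1)) (p i) ∧ G.IntoE (p (j + 1)) (p j) := by
    simp only [ColliderAt, hq₁, hq₂, hq₃, heq]
  rw [OpenAt, hcol, hq₂]
  constructor
  · rintro ⟨hl, hr⟩
    by_cases hci : G.ColliderAt p i
    · exact (hopen i hi (by omega)).1 hci
    by_cases hcj : G.ColliderAt p j
    · rw [heq]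
      exact (hopen j (by omega) hjn).1 hcj
    -- both occurrences are non-colliders, so the cycle between them contains a collider
    have hout : G.DirE (p i) (p (i + 1)) :=
      hD.dirE_of_not_intoE (hp i (by omega)) fun h => hci ⟨hl, h⟩
    have hin : G.DirE (p (j - 1 + 1)) (p (j - 1)) := by
      rw [Nat.sub_add_cancel (by omega)]
      refine hD.dirE_of_not_intoE ?_ fun h => hcj ⟨h, hr⟩
      simpa [Nat.sub_add_cancel (show 1 ≤ j by omega)] using (hp (j - 1) (by omega)).symm
    obtain ⟨k, hik, hkj, hk, hdesc⟩ :=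
      hD.exists_colliderAt_desc hp (by omega) hout hin (by omega)
    obtain ⟨d, hd, hdW⟩ := (hopen k (by omega) (by omega)).1 hk
    exact ⟨d, hdesc.trans hd, hdW⟩
  · intro hnc
    by_cases hci : G.ColliderAt p i
    · rw [heq]
      exact (hopen j (by omega) hjn).2 fun hcj => hnc ⟨hci.1, hcj.2⟩
    · exact (hopen i hi (by omega)).2 hci

theorem IsDAG.exists_isPath_of_isOpen (hD : G.IsDAG) (hp : G.IsProperBackdoorWalk X p n)
    (hopen : G.IsOpen W p n) :
    ∃ q m, G.IsPath q m ∧ G.IsProperBackdoorWalk X q m ∧ G.IsOpen W q m ∧ q m = p n := by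
  induction n using Nat.strong_induction_on generalizing p with
  | _ n ih =>
  by_cases hinj : ∀ i ≤ n, ∀ j ≤ n, p i = p j → i = j
  · exact ⟨p, n, ⟨hp.one_le, hinj, hp.isWalk⟩, hp, hopen, rfl⟩
  obtain ⟨i, j, hij, hjn, heq⟩ : ∃ i j, i < j ∧ j ≤ n ∧ p i = p j := by
    push Not at hinj
    obtain ⟨a, ha, b, hb, hab, hne⟩ := hinj
    rcases hne.lt_or_gt with h | h
    exacts [⟨a, b, h, hb, hab⟩, ⟨b, a, h, ha, hab.symm⟩]
  have hi : 1 ≤ i := Nat.one_le_iff_ne_zero.2 fun h0 =>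
    hp.proper j (by omega) hjn (heq ▸ h0 ▸ hp.start_mem)
  have hcut : G.IsProperBackdoorWalk X (append p i fun k => p (j + k)) (i + (n - j)) := by
    refine ⟨by omega, IsWalk.append (fun k hk => hp.isWalk k (by omega)) (hp.isWalk.shift j) heq,
      by rw [append_of_le _ _ (Nat.zero_le i)]; exact hp.start_mem,
      Proper.append (fun k h₁ h₂ => hp.proper k h₁ (by omega)) (hp.proper.shift j) heq, ?_⟩
    rw [append_of_le _ _ (Nat.zero_le i), append_of_le _ _ hi]
    exact hp.backdoor
  have hcutOpen : G.IsOpen W (append p i fun k => p (j + k)) (i + (n - j)) :=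
    IsOpen.append (fun k h₁ h₂ => hopen k h₁ (by omega))
      (isOpen_shift fun k h₁ h₂ => hopen k (by omega) h₂) heq
      fun hm => hD.openAt_append_shift hp.isWalk hopen hi hij (by omega) heq
  obtain ⟨q, m, hq, hqbd, hqopen, hqm⟩ := ih _ (by omega) hcut hcutOpen
  refine ⟨q, m, hq, hqbd, hqopen, ?_⟩
  rw [hqm, append_of_ge heq (by omega)]
  congr 1
  omega

end MG

end CondAdj

theorem condBackdoor_iff_generalizedBackdoor_general
    {V : Type} (D : CondAdj.MG V) (hD : D.IsDAG)
    (X Y Z S : Set V)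
    (hXY : Disjoint X Y) (hXZ : Disjoint X Z) (hXS : Disjoint X S)
    (hZ : Z ∩ D.De X = ∅) :
    (S ∩ D.De X = ∅ ∧
        ∀ p n, D.IsPathFromTo p n X Y → CondAdj.Proper p n X →
          ¬ D.DirE (p 0) (p 1) → D.Blocks (S ∪ Z) p n) ↔
      ((S ∪ Z) ∩ D.De X = ∅ ∧
        ∀ x ∈ X, ∀ p n, D.IsPathFromTo p n {x} Y → ¬ D.DirE (p 0) (p 1) →
          D.Blocks ((S ∪ Z ∪ X) \ {x}) p n) := by
  open CondAdj.MG in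
  constructor
  · rintro ⟨hS, hB⟩
    refine ⟨by rw [Set.union_inter_distrib_right, hS, hZ, Set.union_empty], ?_⟩
    rintro x hx p n ⟨hpath, hp0, hpn⟩ hbd
    obtain rfl : p 0 = x := hp0
    by_contra hblk
    obtain ⟨q, m, hq, hqopen, hqm⟩ := exists_properBackdoorWalk_suffix hpath.isWalk hx
      (hXY.notMem_of_mem_right hpn) hbd (not_blocks_iff.1 hblk) fun i h₁ h₂ hiX =>
        ⟨Or.inr hiX, fun h => by have := hpath.2.1 i h₂.le 0 (by omega) h; omega⟩
    obtain ⟨r, N, hr, hropen, hrN⟩ := hq.exists_isOpen <| hqopen.mono Set.sdiff_subset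
      fun i h₁ h₂ hi => ⟨hi, fun h => hq.proper i h₁ h₂.le (h ▸ hx)⟩
    obtain ⟨s, M, hs, hsbd, hsopen, hsM⟩ := hD.exists_isPath_of_isOpen hr hropen
    exact not_blocks_iff.2 hsopen
      (hB s M ⟨hs, hsbd.start_mem, by rwa [hsM, hrN, hqm]⟩ hsbd.proper hsbd.backdoor)
  · rintro ⟨hSZ, hB⟩
    refine ⟨Set.subset_eq_empty (Set.inter_subset_inter_left _ Set.subset_union_left) hSZ, ?_⟩
    rintro p n ⟨hpath, hp0, hpn⟩ hprop hbd
    by_contra hblk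
    refine not_blocks_iff.2 ((not_blocks_iff.1 hblk).mono (W' := (S ∪ Z ∪ X) \ {p 0})
      (fun d hd => ⟨Or.inl hd, ?_⟩) fun i h₁ h₂ hi => ?_)
      (hB (p 0) hp0 p n ⟨hpath, rfl, hpn⟩ hbd)
    · rintro rfl
      rcases hd with hd | hd
      exacts [hXS.notMem_of_mem_left hp0 hd, hXZ.notMem_of_mem_left hp0 hd]
    · exact hi.1.resolve_right (hprop i h₁ h₂.le)

/-- comparison of back-door criteria: for pairwise disjoint
node sets `X, Y, Z, S` in a DAG `D` with `Z ∩ De(X, D) = ∅`, `S` satisfies the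
conditional back-door criterion relative to `(X, Y, Z)` iff `S ∪ Z` satisfies
the generalized back-door criterion relative to `(X, Y)`. -/
theorem condBackdoor_iff_generalizedBackdoor
    {V : Type} (D : CondAdj.MG V) (hD : D.IsDAG)
    (X Y Z S : Set V)
    (hXY : Disjoint X Y) (hXZ : Disjoint X Z) (hXS : Disjoint X S)
    (hYZ : Disjoint Y Z) (hYS : Disjoint Y S) (hZS : Disjoint Z S)
    (hZ : Z ∩ D.De X = ∅) :
    (S ∩ D.De X = ∅ ∧
        ∀ p n, D.IsPathFromTo p n X Y → CondAdj.Proper p n X →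
          ¬ D.DirE (p 0) (p 1) → D.Blocks (S ∪ Z) p n) ↔
      ((S ∪ Z) ∩ D.De X = ∅ ∧
        ∀ x ∈ X, ∀ p n, D.IsPathFromTo p n {x} Y → ¬ D.DirE (p 0) (p 1) →
          D.Blocks ((S ∪ Z ∪ X) \ {x}) p n) :=
  condBackdoor_iff_generalizedBackdoor_general D hD X Y Z S hXY hXZ hXS hZ
end

section
/- Let X, Y, and Z be distinct nodes in an MPDAG G. (i) If p is a possibly causal path from X to Y and q is a causal path from Y to Z, then p and q share no node other than Y, and the concatenation p ⊕ q is a possibly causal path from X to Z. (ii) If p is a causal path from X to Y and q is a possibly causal path from Y to Z, then p and q share no node other than Y, and the concatenation p ⊕ q is a possibly causal path from X to Z. -/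
open MeasureTheory
open scoped ENNReal

/-! The whole statement rests on one fact: in an MPDAG no possibly causal path from `u` to `v`
can be closed by a directed path from `v` back to `u`. A shortest possibly causal path has no
chords, and a chordless possibly causal path is causal in some DAG `D ∈ [G]`: orient its first
edge forwards in `D`; an undirected edge of `G` reversed in `D` would then create an unshielded
collider of `D` absent from `G`. Together with the directed path back this is a cycle of `D`.
Both a shared node other than `y` and an arrowhead from `q` into `p` would produce such a
configuration, and without them the concatenation is a possibly causal path. -/

namespace CondAdj

def concat {V : Type} (p : ℕ → V) (n : ℕ) (q : ℕ → V) : ℕ → V :=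
  fun i => if i ≤ n then p i else q (i - n)

def eraseIdx {V : Type} (p : ℕ → V) (a : ℕ) : ℕ → V :=
  fun t => if t < a then p t else p (t + 1)

namespace MG

variable {V : Type} {G : MG V} {p q : ℕ → V} {n m : ℕ}

open Relation

lemma Causal.transGen (hp : G.Causal p n) {i j : ℕ} (hij : i < j) (hjn : j ≤ n) :
    TransGen G.DirE (p i) (p j) := by
  induction j, hij using Nat.le_induction with
  | base => exact .single (hp i (by omega))
  | succ k _ ih => exact (ih (by omega)).tail (hp k (by omega))

lemma Causal.reflTransGen (hp : G.Causal p n) {i j : ℕ} (hij : i ≤ j) (hjn : j ≤ n) :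
    ReflTransGen G.DirE (p i) (p j) := by
  rcases hij.eq_or_lt with rfl | hij
  · exact .refl
  · exact (hp.transGen hij hjn).to_reflTransGen

lemma IsPDG.dirE_of_intoE (hG : G.IsPDG) {a b : V} (h : G.IntoE a b) : G.DirE a b := by
  have h' : G.m a b = Mark.arrow := h
  rcases hG.1 a b (by simp [Adj, h']) with hab | ⟨-, hba⟩ | ⟨hab, -⟩
  · exact hab
  · simp [h'] at hba
  · simp [h'] at hab

lemma IsPDG.possCausal_of_causal (hG : G.IsPDG) (hp : G.Causal p n) : G.PossCausal p n :=
  fun i _ hij hjn hji => hG.2 (p i) ((hp.transGen hij hjn).tail (hG.dirE_of_intoE hji))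

lemma IsPath.segment (hp : G.IsPath p n) {i j : ℕ} (hij : i < j) (hjn : j ≤ n) :
    G.IsPath (fun t => p (i + t)) (j - i) := by
  obtain ⟨-, hinj, hadj⟩ := hp
  refine ⟨by omega, fun a ha b hb hab => ?_, fun a ha => hadj (i + a) (by omega)⟩
  have := hinj (i + a) (by omega) (i + b) (by omega) hab
  omega

lemma PossCausal.segment (hp : G.PossCausal p n) {i j : ℕ} (hjn : j ≤ n) :
    G.PossCausal (fun t => p (i + t)) (j - i) :=
  fun a b hab hb => hp (i + a) (i + b) (by omega) (by omega)

lemma IsPath.eraseIdx (hp : G.IsPath p n) {a : ℕ} (ha : a + 2 ≤ n)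
    (hchord : G.Adj (p a) (p (a + 2))) : G.IsPath (eraseIdx p (a + 1)) (n - 1) := by
  obtain ⟨-, hinj, hadj⟩ := hp
  refine ⟨by omega, fun i hi j hj hij => ?_, fun i hi => ?_⟩
  · simp only [CondAdj.eraseIdx] at hij
    split_ifs at hij
    all_goals have := hinj _ (by omega) _ (by omega) hij
    all_goals omega
  · simp only [CondAdj.eraseIdx]
    rcases lt_trichotomy i a with h | rfl | h
    · simpa [show i < a + 1 by omega, show i + 1 < a + 1 by omega] using hadj i (by omega)
    · simpa using hchord
    · simpa [show ¬ i < a + 1 by omega, show ¬ i < a by omega] using hadj (i + 1) (by omega)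

lemma PossCausal.eraseIdx (hp : G.PossCausal p n) (a : ℕ) :
    G.PossCausal (eraseIdx p a) (n - 1) := by
  intro i j hij hjn
  simp only [CondAdj.eraseIdx]
  split_ifs <;> exact hp _ _ (by omega) (by omega)

lemma exists_possCausal_chordless (hp : G.IsPath p n) (hpc : G.PossCausal p n) :
    ∃ r k, G.IsPath r k ∧ G.PossCausal r k ∧ r 0 = p 0 ∧ r k = p n ∧
      ∀ a, a + 2 ≤ k → ¬ G.Adj (r a) (r (a + 2)) := by
  induction n using Nat.strong_induction_on generalizing p with
  | _ n ih =>
    by_cases hchord : ∃ a, a + 2 ≤ n ∧ G.Adj (p a) (p (a + 2))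
    · obtain ⟨a, ha, hadj⟩ := hchord
      obtain ⟨r, k, hr⟩ := ih (n - 1) (by omega) (hp.eraseIdx ha hadj) (hpc.eraseIdx (a + 1))
      refine ⟨r, k, by simpa [CondAdj.eraseIdx, show ¬ n - 1 < a + 1 by omega,
        show n - 1 + 1 = n by omega] using hr⟩
    · simp only [not_exists, not_and] at hchord
      exact ⟨p, n, hp, hpc, rfl, rfl, hchord⟩

lemma IsPDG.dirE_of_mem_rep_of_dirE (hG : G.IsPDG) {D : MG V} (hD : D ∈ G.rep) {a b c : V}
    (hab : D.DirE a b) (hbc : G.Adj b c) (hcb : ¬ G.IntoE c b) (hac : a ≠ c)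
    (hnac : ¬ G.Adj a c) : D.DirE b c := by
  obtain ⟨⟨hDdir, -⟩, hDadj, hGD, hDcol⟩ := hD
  rcases hG.1 b c hbc with h | h | -
  · exact hGD b c h
  · exact absurd h.1 hcb
  · refine (hDdir b c ((hDadj b c).2 hbc)).resolve_right fun hcb' => hcb ?_
    -- reversing `b − c` in `D` would create the unshielded collider `a → b ← c`
    exact ((hDcol a b c).1 ⟨hab, hcb', hac, fun h => hnac ((hDadj a c).1 h)⟩).2.1.1

lemma IsMPDAG.exists_mem_rep_causal (hG : G.IsMPDAG) (hp : G.IsPath p n)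
    (hpc : G.PossCausal p n) (hchord : ∀ a, a + 2 ≤ n → ¬ G.Adj (p a) (p (a + 2))) :
    ∃ D ∈ G.rep, D.Causal p n := by
  obtain ⟨D, hD, h01⟩ : ∃ D ∈ G.rep, D.DirE (p 0) (p 1) := by
    rcases hG.1.1 (p 0) (p 1) (hp.2.2 0 hp.1) with h | h | h
    · obtain ⟨D, hD⟩ := hG.2.1
      exact ⟨D, hD, hD.2.2.1 _ _ h⟩
    · exact absurd h.1 (hpc 0 1 one_pos hp.1)
    · exact (hG.2.2 _ _ (Or.inl h)).1
  refine ⟨D, hD, fun i hi => ?_⟩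
  induction i with
  | zero => exact h01
  | succ k ih =>
    refine hG.1.dirE_of_mem_rep_of_dirE hD (ih (by omega)) (hp.2.2 _ hi)
      (hpc _ _ (by omega) hi) (fun h => ?_) (hchord k hi)
    have := hp.2.1 k (by omega) (k + 2) (by omega) h
    omega

lemma IsMPDAG.not_transGen_last_first (hG : G.IsMPDAG) (hp : G.IsPath p n)
    (hpc : G.PossCausal p n) : ¬ TransGen G.DirE (p n) (p 0) := by
  intro hback
  obtain ⟨r, k, hr, hrpc, hr0, hrk, hchord⟩ := exists_possCausal_chordless hp hpc
  obtain ⟨D, hD, hrD⟩ := hG.exists_mem_rep_causal hr hrpc hchord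
  have hDback : TransGen D.DirE (r k) (r 0) := by
    rw [hr0, hrk]
    exact TransGen.mono hD.2.2.1 _ _ hback
  exact hD.1.2 _ ((hrD.transGen hr.1 le_rfl).trans hDback)

lemma IsMPDAG.not_transGen_of_le (hG : G.IsMPDAG) (hp : G.IsPath p n)
    (hpc : G.PossCausal p n) {i j : ℕ} (hij : i ≤ j) (hjn : j ≤ n) :
    ¬ TransGen G.DirE (p j) (p i) := by
  rcases hij.eq_or_lt with rfl | hij
  · exact hG.1.2 (p i)
  · simpa [Nat.add_sub_cancel' hij.le] using
      hG.not_transGen_last_first (hp.segment hij hjn) (hpc.segment hjn)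

lemma IsMPDAG.not_reflTransGen_of_lt (hG : G.IsMPDAG) (hp : G.IsPath p n)
    (hpc : G.PossCausal p n) {i j : ℕ} (hij : i < j) (hjn : j ≤ n) :
    ¬ ReflTransGen G.DirE (p j) (p i) := by
  rw [reflTransGen_iff_eq_or_transGen]
  rintro (heq | htrans)
  · have := hp.2.1 i (by omega) j hjn heq
    omega
  · exact hG.not_transGen_of_le hp hpc hij.le hjn htrans

lemma IsPath.concat (hp : G.IsPath p n) (hq : G.IsPath q m) (hpq : q 0 = p n)
    (hdisj : ∀ i ≤ n, ∀ j, 1 ≤ j → j ≤ m → p i ≠ q j) :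
    G.IsPath (concat p n q) (n + m) := by
  refine ⟨by have := hp.1; omega, fun i hi j hj hij => ?_, fun i hi => ?_⟩
  · simp only [CondAdj.concat] at hij
    split_ifs at hij with h1 h2 h2
    · exact hp.2.1 i h1 j h2 hij
    · exact absurd hij (hdisj i h1 (j - n) (by omega) (by omega))
    · exact absurd hij.symm (hdisj j h2 (i - n) (by omega) (by omega))
    · have := hq.2.1 _ (by omega) _ (by omega) hij
      omega
  · simp only [CondAdj.concat]
    rcases lt_trichotomy i n with h | rfl | h
    · simpa [h.le, show i + 1 ≤ n by omega] using hp.2.2 i h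
    · simpa [← hpq] using hq.2.2 0 hq.1
    · simpa [show ¬ i ≤ n by omega, show ¬ i + 1 ≤ n by omega,
        show i + 1 - n = i - n + 1 by omega] using hq.2.2 (i - n) (by omega)

lemma PossCausal.concat (hp : G.PossCausal p n) (hq : G.PossCausal q m)
    (hcross : ∀ i ≤ n, ∀ j, 1 ≤ j → j ≤ m → ¬ G.IntoE (q j) (p i)) :
    G.PossCausal (concat p n q) (n + m) := by
  intro i j hij hjnm
  simp only [CondAdj.concat]
  split_ifs with h1 h2 h2
  · exact hp i j hij h1
  · omega
  · exact hcross i h2 (j - n) (by omega) (by omega)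
  · exact hq _ _ (by omega) (by omega)

lemma isPath_possCausal_concat (hp : G.IsPath p n) (hq : G.IsPath q m) (hpq : q 0 = p n)
    (hppc : G.PossCausal p n) (hqpc : G.PossCausal q m)
    (hdisj : ∀ i ≤ n, ∀ j, 1 ≤ j → j ≤ m → p i ≠ q j)
    (hcross : ∀ i ≤ n, ∀ j, 1 ≤ j → j ≤ m → ¬ G.IntoE (q j) (p i)) :
    (∀ i ≤ n, ∀ j ≤ m, p i = q j → i = n ∧ j = 0) ∧
      G.IsPath (concat p n q) (n + m) ∧ G.PossCausal (concat p n q) (n + m) ∧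
      concat p n q 0 = p 0 ∧ concat p n q (n + m) = q m := by
  refine ⟨fun i hi j hj hij => ?_, hp.concat hq hpq hdisj, hppc.concat hqpc hcross,
    by simp [CondAdj.concat], by simp [CondAdj.concat, Nat.one_le_iff_ne_zero.mp hq.1]⟩
  obtain rfl | hj0 := Nat.eq_zero_or_pos j
  · exact ⟨hp.2.1 i hi n le_rfl (hij.trans hpq), rfl⟩
  · exact absurd hij (hdisj i hi j hj0 hj)

end MG
end CondAdj

theorem concat_possCausal_mpdag_general
    {V : Type} (G : CondAdj.MG V) (hG : G.IsMPDAG)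
    (x y z : V)
    (p : ℕ → V) (n : ℕ) (q : ℕ → V) (m : ℕ)
    (hp : G.IsPath p n) (hp0 : p 0 = x) (hpn : p n = y)
    (hq : G.IsPath q m) (hq0 : q 0 = y) (hqm : q m = z) :
    (G.PossCausal p n → G.Causal q m →
      ((∀ i ≤ n, ∀ j ≤ m, p i = q j → i = n ∧ j = 0) ∧
        G.IsPath (fun i => if i ≤ n then p i else q (i - n)) (n + m) ∧
        G.PossCausal (fun i => if i ≤ n then p i else q (i - n)) (n + m) ∧
        (fun i => if i ≤ n then p i else q (i - n)) 0 = x ∧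
        (fun i => if i ≤ n then p i else q (i - n)) (n + m) = z)) ∧
    (G.Causal p n → G.PossCausal q m →
      ((∀ i ≤ n, ∀ j ≤ m, p i = q j → i = n ∧ j = 0) ∧
        G.IsPath (fun i => if i ≤ n then p i else q (i - n)) (n + m) ∧
        G.PossCausal (fun i => if i ≤ n then p i else q (i - n)) (n + m) ∧
        (fun i => if i ≤ n then p i else q (i - n)) 0 = x ∧
        (fun i => if i ≤ n then p i else q (i - n)) (n + m) = z)) := by
  subst hp0 hpn hqm
  refine ⟨fun hppc hqc => ?_, fun hpc hqpc => ?_⟩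
  · have hreach : ∀ j, 1 ≤ j → j ≤ m → Relation.TransGen G.DirE (p n) (q j) := by
      intro j hj hjm
      rw [← hq0]
      exact hqc.transGen hj hjm
    exact CondAdj.MG.isPath_possCausal_concat hp hq hq0 hppc (hG.1.possCausal_of_causal hqc)
      (fun i hi j hj hjm heq => hG.not_transGen_of_le hp hppc hi le_rfl
        (heq ▸ hreach j hj hjm))
      (fun i hi j hj hjm hinto => hG.not_transGen_of_le hp hppc hi le_rfl
        ((hreach j hj hjm).tail (hG.1.dirE_of_intoE hinto)))
  · have hreach : ∀ i ≤ n, Relation.ReflTransGen G.DirE (p i) (q 0) := by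
      intro i hi
      rw [hq0]
      exact hpc.reflTransGen hi le_rfl
    exact CondAdj.MG.isPath_possCausal_concat hp hq hq0 (hG.1.possCausal_of_causal hpc) hqpc
      (fun i hi j hj hjm heq => hG.not_reflTransGen_of_lt hq hqpc hj hjm
        (heq ▸ hreach i hi))
      (fun i hi j _ hjm hinto => hG.not_transGen_of_le hq hqpc (Nat.zero_le j) hjm
        (.head' (hG.1.dirE_of_intoE hinto) (hreach i hi)))

/-- concatenation of (possibly) causal paths: for distinct
nodes `x, y, z` of an MPDAG `G`, a path `p` from `x` to `y` and a path `q` from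
`y` to `z`: (i) if `p` is possibly causal and `q` is causal, then `p` and `q`
share no node other than `y` and the concatenation `p ⊕ q` is a possibly causal
path from `x` to `z`; (ii) likewise if `p` is causal and `q` is possibly
causal. -/
theorem concat_possCausal_mpdag
    {V : Type} (G : CondAdj.MG V) (hG : G.IsMPDAG)
    (x y z : V) (hxy : x ≠ y) (hxz : x ≠ z) (hyz : y ≠ z)
    (p : ℕ → V) (n : ℕ) (q : ℕ → V) (m : ℕ)
    (hp : G.IsPath p n) (hp0 : p 0 = x) (hpn : p n = y)
    (hq : G.IsPath q m) (hq0 : q 0 = y) (hqm : q m = z) :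
    (G.PossCausal p n → G.Causal q m →
      ((∀ i ≤ n, ∀ j ≤ m, p i = q j → i = n ∧ j = 0) ∧
        G.IsPath (fun i => if i ≤ n then p i else q (i - n)) (n + m) ∧
        G.PossCausal (fun i => if i ≤ n then p i else q (i - n)) (n + m) ∧
        (fun i => if i ≤ n then p i else q (i - n)) 0 = x ∧
        (fun i => if i ≤ n then p i else q (i - n)) (n + m) = z)) ∧
    (G.Causal p n → G.PossCausal q m →
      ((∀ i ≤ n, ∀ j ≤ m, p i = q j → i = n ∧ j = 0) ∧
        G.IsPath (fun i => if i ≤ n then p i else q (i - n)) (n + m) ∧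
        G.PossCausal (fun i => if i ≤ n then p i else q (i - n)) (n + m) ∧
        (fun i => if i ≤ n then p i else q (i - n)) 0 = x ∧
        (fun i => if i ≤ n then p i else q (i - n)) (n + m) = z)) :=
  concat_possCausal_mpdag_general G hG x y z p n q m hp hp0 hpn hq hq0 hqm
end
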